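/- Let ε > 0, let (W_t)_{t∈[−ε,0]} be a Brownian motion (with some fixed variance σ² > 0), and let (W''_t)_{t∈[−ε,0]} be an independent Brownian motion with W''_{−ε} ≥ W_{−ε}. Let W' be the reflection of W'' on W, i.e. W'_t = W''_t + sup_{−ε ≤ s ≤ t} (W_s − W''_s) for t ∈ [−ε,0] (when W''_{−ε} = W_{−ε}; more generally reflection starts at the first meeting time). Then P( W'₀ > W₀ ) = 1. -/

import Mathlib

open MeasureTheory ProbabilityTheory

/-- A process `W` is a Brownian motion on `[a, b]` with variance parameter `σ2` (under `P`):
measurable marginals, continuous paths on `[a, b]`, Gaussian increments with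
`Var(W_t − W_s) = σ2·(t − s)`, and independent increments. -/
def IsBrownianMotion {Ω : Type} [MeasurableSpace Ω] (P : Measure Ω) (σ2 : ℝ) (a b : ℝ)
    (W : ℝ → Ω → ℝ) : Prop :=
  (∀ t, Measurable (W t)) ∧
  (∀ ω, ContinuousOn (fun t => W t ω) (Set.Icc a b)) ∧
  (∀ s t : ℝ, a ≤ s → s ≤ t → t ≤ b →
    P.map (fun ω => W t ω - W s ω) = gaussianReal 0 (Real.toNNReal (σ2 * (t - s)))) ∧
  (∀ (n : ℕ) (t : Fin (n + 1) → ℝ), Monotone t → (∀ i, t i ∈ Set.Icc a b) →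
    iIndepFun
      (fun (i : Fin n) (ω : Ω) => W (t i.succ) ω - W (t i.castSucc) ω) P)

/-! Write `D = W − W''`. If `W'₀ ≤ W₀`, then `D` attains its maximum over `[−ε, 0]` at `0`, so
`D_{tₙ} ≤ D₀` along any sequence `tₙ ↑ 0`. The event that this holds eventually is a tail event
of the independent increments `D_{tₙ₊₁} − D_{tₙ}`, so by Kolmogorov's 0-1 law it has
probability 0 or 1. It is contained in each `{D_{tₙ} ≤ D₀}`, whose probability is exactly `1/2`:
exchanging the independent, identically distributed increments of `W` and `W''` over `[tₙ, 0]`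
turns it into `{D_{tₙ} ≥ D₀}`, and the tie `D_{tₙ} = D₀` has probability 0. Hence it is null. -/

open Filter Topology

namespace ProbabilityTheory

variable {Ω : Type*} [MeasurableSpace Ω] {P : Measure Ω} [IsProbabilityMeasure P]

lemma IndepFun.map_prodMk_comm {α : Type*} [MeasurableSpace α] {X Y : Ω → α}
    (hX : AEMeasurable X P) (hY : AEMeasurable Y P) (h : IndepFun X Y P)
    (hlaw : P.map X = P.map Y) :
    P.map (fun ω => (X ω, Y ω)) = P.map (fun ω => (Y ω, X ω)) := by
  rw [(indepFun_iff_map_prod_eq_prod_map_map hX hY).1 h,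
    (indepFun_iff_map_prod_eq_prod_map_map hY hX).1 h.symm, hlaw]

lemma IndepFun.measure_eq_eq_zero {X Y : Ω → ℝ} (hX : Measurable X) (hY : Measurable Y)
    (h : IndepFun X Y P) [NullSingletonClass (P.map Y)] :
    P {ω | X ω = Y ω} = 0 := by
  have hdiag : MeasurableSet {p : ℝ × ℝ | p.1 = p.2} := measurableSet_diagonal
  change P ((fun ω => (X ω, Y ω)) ⁻¹' {p | p.1 = p.2}) = 0
  rw [← Measure.map_apply (hX.prodMk hY) hdiag,
    (indepFun_iff_map_prod_eq_prod_map_map hX.aemeasurable hY.aemeasurable).1 h,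
    Measure.prod_apply hdiag]
  simp [Set.preimage]

lemma IndepFun.measure_le_eq_half {X Y : Ω → ℝ} (hX : Measurable X) (hY : Measurable Y)
    (h : IndepFun X Y P) (hlaw : P.map X = P.map Y) [NullSingletonClass (P.map Y)] :
    P {ω | Y ω ≤ X ω} = 2⁻¹ := by
  have hle : MeasurableSet {p : ℝ × ℝ | p.2 ≤ p.1} :=
    measurableSet_le measurable_snd measurable_fst
  have hsymm : P {ω | Y ω ≤ X ω} = P {ω | X ω ≤ Y ω} := by
    change P ((fun ω => (X ω, Y ω)) ⁻¹' {p | p.2 ≤ p.1}) =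
      P ((fun ω => (Y ω, X ω)) ⁻¹' {p | p.2 ≤ p.1})
    rw [← Measure.map_apply (hX.prodMk hY) hle, ← Measure.map_apply (hY.prodMk hX) hle,
      h.map_prodMk_comm hX.aemeasurable hY.aemeasurable hlaw]
  have hunion : {ω | Y ω ≤ X ω} ∪ {ω | X ω ≤ Y ω} = Set.univ := by
    ext ω; simp [le_total]
  have hinter : {ω | Y ω ≤ X ω} ∩ {ω | X ω ≤ Y ω} = {ω | X ω = Y ω} := by
    ext ω; simp [le_antisymm_iff, and_comm]
  refine ENNReal.eq_inv_of_mul_eq_one_left ?_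
  calc P {ω | Y ω ≤ X ω} * 2 = P {ω | Y ω ≤ X ω} + P {ω | X ω ≤ Y ω} := by
        rw [mul_two, hsymm]
    _ = P Set.univ + P {ω | X ω = Y ω} := by
        rw [← measure_union_add_inter _ (measurableSet_le hX hY), hunion, hinter]
    _ = 1 := by rw [h.measure_eq_eq_zero hX hY, measure_univ, add_zero]

lemma iIndepFun.prodMk_of_indepFun {ι α β : Type*} [MeasurableSpace α] [MeasurableSpace β]
    {X : ι → Ω → α} {Y : ι → Ω → β} (hXm : ∀ i, Measurable (X i))
    (hYm : ∀ i, Measurable (Y i)) (hX : iIndepFun X P) (hY : iIndepFun Y P)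
    (hXY : IndepFun (fun ω i => X i ω) (fun ω i => Y i ω) P) :
    iIndepFun (fun i ω => (X i ω, Y i ω)) P := by
  refine iIndepFun_iff_finset.2 fun s => ?_
  have hXs : Measurable fun ω (i : s) => X i ω := measurable_pi_lambda _ fun i => hXm i
  have hYs : Measurable fun ω (i : s) => Y i ω := measurable_pi_lambda _ fun i => hYm i
  have hXYs : IndepFun (fun ω (i : s) => X i ω) (fun ω (i : s) => Y i ω) P :=
    hXY.comp (measurable_pi_lambda (fun (g : ι → α) (i : s) => g i) fun _ => measurable_pi_apply _)
      (measurable_pi_lambda (fun (g : ι → β) (i : s) => g i) fun _ => measurable_pi_apply _)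
  have hlaw (i : ι) : P.map (fun ω => (X i ω, Y i ω)) = (P.map (X i)).prod (P.map (Y i)) :=
    (indepFun_iff_map_prod_eq_prod_map_map (hXm i).aemeasurable (hYm i).aemeasurable).1
      (hXY.comp (measurable_pi_apply i) (measurable_pi_apply i))
  have _ (i : ι) := Measure.isProbabilityMeasure_map (μ := P) (hXm i).aemeasurable
  have _ (i : ι) := Measure.isProbabilityMeasure_map (μ := P) (hYm i).aemeasurable
  refine (iIndepFun_iff_map_fun_eq_pi_map fun i : s =>
    ((hXm i).prodMk (hYm i)).aemeasurable).2 ?_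
  let e := MeasurableEquiv.arrowProdEquivProdArrow α β s
  calc P.map (fun ω (i : s) => (X i ω, Y i ω))
      = (P.map fun ω => ((fun (i : s) => X i ω), (fun (i : s) => Y i ω))).map e.symm := by
        rw [Measure.map_map e.symm.measurable (hXs.prodMk hYs)]
        rfl
    _ = ((Measure.pi fun i : s => P.map (X i)).prod
          (Measure.pi fun i : s => P.map (Y i))).map e.symm := by
        rw [(indepFun_iff_map_prod_eq_prod_map_map hXs.aemeasurable hYs.aemeasurable).1 hXYs,
          (hX.restrict s).map_fun_eq_pi_map fun i : s => (hXm i).aemeasurable,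
          (hY.restrict s).map_fun_eq_pi_map fun i : s => (hYm i).aemeasurable]
    _ = Measure.pi fun i : s => P.map (fun ω => (X i ω, Y i ω)) := by
        rw [← (measurePreserving_arrowProdEquivProdArrow α β s _ _).map_eq,
          MeasurableEquiv.map_symm_map]
        simp_rw [hlaw]

lemma HasIndepIncrements.sub_of_indepFun {T E : Type*} [Preorder T] [MeasurableSpace E]
    [AddCommGroup E] [MeasurableSub₂ E] {X Y : T → Ω → E}
    (hXm : ∀ t, Measurable (X t)) (hYm : ∀ t, Measurable (Y t))
    (hX : HasIndepIncrements X P) (hY : HasIndepIncrements Y P)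
    (hXY : IndepFun (fun ω t => X t ω) (fun ω t => Y t ω) P) :
    HasIndepIncrements (fun t ω => X t ω - Y t ω) P := by
  intro n t ht
  have hincr : Measurable fun (g : T → E) (i : Fin n) => g (t i.succ) - g (t i.castSucc) :=
    measurable_pi_lambda _ fun i => (measurable_pi_apply _).sub (measurable_pi_apply _)
  have hpair := iIndepFun.prodMk_of_indepFun (fun _ => (hXm _).sub (hXm _))
    (fun _ => (hYm _).sub (hYm _)) (hX n t ht) (hY n t ht) (hXY.comp hincr hincr)
  convert hpair.comp (fun _ p => p.1 - p.2) fun _ => measurable_fst.sub measurable_snd using 2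
  ext ω
  simp only [Pi.sub_apply, Function.comp_apply]
  abel

end ProbabilityTheory

lemma MeasureTheory.measure_liminf_atTop_le {α : Type*} [MeasurableSpace α] {μ : Measure α}
    {s : ℕ → Set α} {c : ENNReal} (h : ∀ n, μ (s n) ≤ c) : μ (liminf s atTop) ≤ c := by
  have hmono : Monotone fun n => ⋂ i ≥ n, s i :=
    fun m n hmn => Set.biInter_subset_biInter_left fun i hi => hmn.trans hi
  rw [liminf_eq_iSup_iInf_of_nat]
  simp only [Set.iSup_eq_iUnion, Set.iInf_eq_iInter]
  rw [hmono.measure_iUnion]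
  exact iSup_le fun n => (measure_mono (Set.biInter_subset_of_mem le_rfl)).trans (h n)

lemma measurable_limit_sub_of_tendsto {Ω : Type*} {S : ℕ → Ω → ℝ} {L : Ω → ℝ}
    (hL : ∀ ω, Tendsto (fun n => S n ω) atTop (𝓝 (L ω))) (k : ℕ) :
    Measurable[⨆ i, MeasurableSpace.comap (fun ω => S (i + k + 1) ω - S (i + k) ω) inferInstance]
      (fun ω => L ω - S k ω) := by
  set M := ⨆ i, MeasurableSpace.comap (fun ω => S (i + k + 1) ω - S (i + k) ω) inferInstance
  have hsum (N : ℕ) :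
      Measurable[M] fun ω => ∑ i ∈ Finset.range N, (S (i + k + 1) ω - S (i + k) ω) :=
    Finset.measurable_sum _ fun i _ => (comap_measurable _).mono (le_iSup (fun i =>
      MeasurableSpace.comap (fun ω => S (i + k + 1) ω - S (i + k) ω) inferInstance) i) le_rfl
  refine @measurable_of_tendsto_metrizable Ω ℝ M _ _ _ _ _ _ hsum (tendsto_pi_nhds.2 fun ω => ?_)
  have htelescope (N : ℕ) :
      ∑ i ∈ Finset.range N, (S (i + k + 1) ω - S (i + k) ω) = S (N + k) ω - S k ω := by
    simpa [add_right_comm] using Finset.sum_range_sub (fun i => S (i + k) ω) N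
  simp_rw [htelescope]
  exact ((tendsto_add_atTop_iff_nat k).2 (hL ω)).sub_const _

theorem measure_liminf_le_of_tendsto_eq_zero_or_one {Ω : Type*} [MeasurableSpace Ω]
    {P : Measure Ω} {S : ℕ → Ω → ℝ} {L : Ω → ℝ} (hS : ∀ n, Measurable (S n))
    (hindep : iIndepFun (fun n ω => S (n + 1) ω - S n ω) P)
    (hL : ∀ ω, Tendsto (fun n => S n ω) atTop (𝓝 (L ω))) :
    P (liminf (fun n => {ω | S n ω ≤ L ω}) atTop) = 0 ∨
      P (liminf (fun n => {ω | S n ω ≤ L ω}) atTop) = 1 := by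
  set s : ℕ → MeasurableSpace Ω :=
    fun n => MeasurableSpace.comap (fun ω => S (n + 1) ω - S n ω) inferInstance
  -- `L - S k` is a limit of increments of index `≥ k`, so the event is in the tail σ-algebra.
  refine measure_zero_or_one_of_measurableSet_limsup_atTop
    (fun n => ((hS (n + 1)).sub (hS n)).comap_le) hindep.iIndep ?_
  rw [limsup_eq_iInf_iSup_of_nat', MeasurableSpace.measurableSet_iInf]
  intro j
  rw [← liminf_nat_add _ j]
  refine @MeasurableSet.measurableSet_liminf Ω (⨆ i, s (i + j)) _ fun n => ?_
  have hle : (⨆ i, s (i + (n + j))) ≤ ⨆ i, s (i + j) :=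
    iSup_le fun i => le_iSup_of_le (i + n) (by rw [add_assoc])
  have hset : {ω | S (n + j) ω ≤ L ω} = (fun ω => L ω - S (n + j) ω) ⁻¹' Set.Ici 0 := by
    ext ω; simp [sub_nonneg]
  exact hset ▸ ((measurable_limit_sub_of_tendsto hL (n + j)).mono hle le_rfl) measurableSet_Ici

namespace IsBrownianMotion

variable {Ω : Type} [MeasurableSpace Ω] {P : Measure Ω} {σ2 a b : ℝ} {W W'' : ℝ → Ω → ℝ}

lemma hasIndepIncrements (hW : IsBrownianMotion P σ2 a b W) :
    HasIndepIncrements (fun t : Set.Icc a b => W t) P :=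
  fun n t ht => hW.2.2.2 n (fun i => t i) (Subtype.mono_coe _ |>.comp ht) fun i => (t i).2

lemma nullSingletonClass_map_sub (hW : IsBrownianMotion P σ2 a b W) (hσ2 : 0 < σ2) {s t : ℝ}
    (hs : a ≤ s) (hst : s < t) (ht : t ≤ b) :
    NullSingletonClass (P.map fun ω => W t ω - W s ω) := by
  have hvar : (σ2 * (t - s)).toNNReal ≠ 0 := by
    simpa using mul_pos hσ2 (sub_pos.2 hst)
  rw [hW.2.2.1 s t hs hst.le ht, gaussianReal_of_var_ne_zero _ hvar]
  infer_instance

variable [IsProbabilityMeasure P]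

lemma iIndepFun_increments_sub (hW : IsBrownianMotion P σ2 a b W)
    (hW'' : IsBrownianMotion P σ2 a b W'')
    (hindep : IndepFun (fun ω t => W t ω) (fun ω t => W'' t ω) P) {t : ℕ → ℝ} (ht : Monotone t)
    (hta : ∀ n, t n ∈ Set.Icc a b) :
    iIndepFun (fun n ω => (W (t (n + 1)) ω - W'' (t (n + 1)) ω) - (W (t n) ω - W'' (t n) ω)) P := by
  have hrestrict : Measurable fun (g : ℝ → ℝ) (u : Set.Icc a b) => g u :=
    measurable_pi_lambda _ fun _ => measurable_pi_apply _
  exact (HasIndepIncrements.sub_of_indepFun (fun _ => hW.1 _) (fun _ => hW''.1 _)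
    hW.hasIndepIncrements hW''.hasIndepIncrements (hindep.comp hrestrict hrestrict)).nat
    (t := fun n => ⟨t n, hta n⟩) ht

lemma measure_sub_le_sub_eq_half (hσ2 : 0 < σ2) (hW : IsBrownianMotion P σ2 a b W)
    (hW'' : IsBrownianMotion P σ2 a b W'')
    (hindep : IndepFun (fun ω t => W t ω) (fun ω t => W'' t ω) P) {s t : ℝ}
    (hs : a ≤ s) (hst : s < t) (ht : t ≤ b) :
    P {ω | W s ω - W'' s ω ≤ W t ω - W'' t ω} = 2⁻¹ := by
  have hincr : Measurable fun g : ℝ → ℝ => g t - g s :=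
    (measurable_pi_apply _).sub (measurable_pi_apply _)
  have := hW''.nullSingletonClass_map_sub hσ2 hs hst ht
  have hset : {ω | W s ω - W'' s ω ≤ W t ω - W'' t ω} =
      {ω | W'' t ω - W'' s ω ≤ W t ω - W s ω} := by
    ext ω; simp only [Set.mem_ofPred_eq]; constructor <;> intro h <;> linarith
  rw [hset]
  exact IndepFun.measure_le_eq_half ((hW.1 t).sub (hW.1 s)) ((hW''.1 t).sub (hW''.1 s))
    (hindep.comp hincr hincr)
    ((hW.2.2.1 s t hs hst.le ht).trans (hW''.2.2.1 s t hs hst.le ht).symm)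

lemma measure_liminf_sub_le_sub_eq_zero (hσ2 : 0 < σ2) (hW : IsBrownianMotion P σ2 a b W)
    (hW'' : IsBrownianMotion P σ2 a b W'')
    (hindep : IndepFun (fun ω t => W t ω) (fun ω t => W'' t ω) P) {t : ℕ → ℝ} (ht : Monotone t)
    (hta : ∀ n, t n ∈ Set.Ico a b) (ht_lim : Tendsto t atTop (𝓝 b)) :
    P (liminf (fun n => {ω | W (t n) ω - W'' (t n) ω ≤ W b ω - W'' b ω}) atTop) = 0 := by
  have hta' n : t n ∈ Set.Icc a b := Set.Ico_subset_Icc_self (hta n)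
  have hb : b ∈ Set.Icc a b := ⟨(hta 0).1.trans (hta 0).2.le, le_rfl⟩
  have hlim ω : Tendsto (fun n => W (t n) ω - W'' (t n) ω) atTop (𝓝 (W b ω - W'' b ω)) :=
    ((hW.2.1 ω).sub (hW''.2.1 ω) b hb).tendsto.comp
      (tendsto_nhdsWithin_iff.2 ⟨ht_lim, .of_forall hta'⟩)
  have hhalf := measure_liminf_atTop_le fun n =>
    (hW.measure_sub_le_sub_eq_half hσ2 hW'' hindep (hta n).1 (hta n).2 le_rfl).le
  refine (measure_liminf_le_of_tendsto_eq_zero_or_one (S := fun n ω => W (t n) ω - W'' (t n) ω)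
    (fun n => (hW.1 _).sub (hW''.1 _)) (hW.iIndepFun_increments_sub hW'' hindep ht hta')
    hlim).resolve_right fun h => ?_
  rw [h] at hhalf
  norm_num at hhalf

theorem ae_exists_sub_lt (hσ2 : 0 < σ2) (hab : a < b) (hW : IsBrownianMotion P σ2 a b W)
    (hW'' : IsBrownianMotion P σ2 a b W'')
    (hindep : IndepFun (fun ω t => W t ω) (fun ω t => W'' t ω) P) :
    ∀ᵐ ω ∂P, ∃ s ∈ Set.Icc a b, W b ω - W'' b ω < W s ω - W'' s ω := by
  obtain ⟨t, ht_mono, ht_mem, ht_lim⟩ := exists_seq_strictMono_tendsto' hab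
  have hnull := hW.measure_liminf_sub_le_sub_eq_zero hσ2 hW'' hindep ht_mono.monotone
    (fun n => Set.Ioo_subset_Ico_self (ht_mem n)) ht_lim
  filter_upwards [measure_eq_zero_iff_ae_notMem.1 hnull] with ω hω
  obtain ⟨n, hn⟩ : ∃ n, ¬W (t n) ω - W'' (t n) ω ≤ W b ω - W'' b ω := by
    by_contra! h
    exact hω (mem_liminf_iff_eventually_mem.2 (.of_forall h))
  exact ⟨t n, Set.Ioo_subset_Icc_self (ht_mem n), not_le.1 hn⟩

end IsBrownianMotion

theorem stmt17_general (σ2 ε : ℝ) (hσ2 : 0 < σ2) (hε : 0 < ε)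
    (Ω : Type) [MeasurableSpace Ω] (P : Measure Ω) [IsProbabilityMeasure P]
    (W W'' W' : ℝ → Ω → ℝ)
    (hW : IsBrownianMotion P σ2 (-ε) 0 W)
    (hW'' : IsBrownianMotion P σ2 (-ε) 0 W'')
    (hindep : ProbabilityTheory.IndepFun
      (fun ω => fun t : ℝ => W t ω) (fun ω => fun t : ℝ => W'' t ω) P)
    (hW' : ∀ t ∈ Set.Icc (-ε) (0 : ℝ), ∀ ω,
      W' t ω = W'' t ω + max (sSup ((fun s => W s ω - W'' s ω) '' Set.Icc (-ε) t)) 0) :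
    P {ω | W 0 ω < W' 0 ω} = 1 := by
  have h0 : (0 : ℝ) ∈ Set.Icc (-ε) 0 := ⟨neg_nonpos.2 hε.le, le_rfl⟩
  have hae : ∀ᵐ ω ∂P, W 0 ω < W' 0 ω := by
    filter_upwards [hW.ae_exists_sub_lt hσ2 (neg_lt_zero.2 hε) hW'' hindep]
      with ω ⟨s, hs, hlt⟩
    have hsup : W s ω - W'' s ω ≤ sSup ((fun s => W s ω - W'' s ω) '' Set.Icc (-ε) 0) :=
      le_csSup (isCompact_Icc.bddAbove_image ((hW.2.1 ω).sub (hW''.2.1 ω))) ⟨s, hs, rfl⟩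
    rw [hW' 0 h0 ω]
    linarith [le_max_left (sSup ((fun s => W s ω - W'' s ω) '' Set.Icc (-ε) 0)) 0]
  exact (measure_congr (ae_eq_univ.2 (ae_iff.1 hae))).trans measure_univ

/-- If `W''` is a Brownian motion independent of the Brownian motion `W` on `[−ε, 0]`, with
`W''_{−ε} ≥ W_{−ε}`, and `W'` is the reflection of `W''` on the barrier `W`
(`W'_t = W''_t + max(sup_{−ε ≤ s ≤ t}(W_s − W''_s), 0)`, which equals `W''` before the first
meeting time and the reflected motion afterwards), then `P(W'₀ > W₀) = 1`. -/
theorem stmt17 (σ2 ε : ℝ) (hσ2 : 0 < σ2) (hε : 0 < ε)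
    (Ω : Type) [MeasurableSpace Ω] (P : Measure Ω) [IsProbabilityMeasure P]
    (W W'' W' : ℝ → Ω → ℝ)
    (hW : IsBrownianMotion P σ2 (-ε) 0 W)
    (hW'' : IsBrownianMotion P σ2 (-ε) 0 W'')
    (hindep : ProbabilityTheory.IndepFun
      (fun ω => fun t : ℝ => W t ω) (fun ω => fun t : ℝ => W'' t ω) P)
    (hstart : ∀ᵐ ω ∂P, W (-ε) ω ≤ W'' (-ε) ω)
    (hW' : ∀ t ∈ Set.Icc (-ε) (0 : ℝ), ∀ ω,
      W' t ω = W'' t ω + max (sSup ((fun s => W s ω - W'' s ω) '' Set.Icc (-ε) t)) 0) :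
    P {ω | W 0 ω < W' 0 ω} = 1 :=
  stmt17_general σ2 ε hσ2 hε Ω P W W'' W' hW hW'' hindep hW'
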